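/- Let n ≥ 2 and let λ_1 ≤ … ≤ λ_n be real numbers. Fix i with λ_i < λ_{i+1}, and let k ≥ 1 be the number of indices j with λ_j = λ_i. Then for every ξ ∈ ℝ^n the polynomial (λ_i − t)^{k−1} divides I_ξ(t), and the quotient polynomial Î_ξ(t) = I_ξ(t)/(λ_i − t)^{k−1} satisfies Î_ξ(λ_i) = ( ∏_{l : λ_l ≠ λ_i} (λ_l − λ_i) ) · Σ_{j : λ_j = λ_i} ξ_j². In particular ξ ↦ Î_ξ(λ_i) is a quadratic form on ℝ^n which is not identically zero. -/

import Mathlib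

/-!
Write `p = λ_i − t` and let `S` be the set of indices `j` with `λ_j = λ_i`, so that `k = #S`.
Every `Π_j` is `p ^ #(S \ {j})` times the product of the factors `λ_l − t` with `λ_l ≠ λ_i` and
`l ≠ j`, so `p ^ (k − 1)` divides it. After dividing out, the terms with `j ∉ S` keep a factor
`p` and vanish at `t = λ_i`, while each term with `j ∈ S` becomes `ξ_j² ∏_{λ_l ≠ λ_i} (λ_l − λ_i)`.
-/

open Polynomial

/-- `Π_i(t) = ∏_{j ≠ i} (λ_j − t)` as a real polynomial in `t`. -/
noncomputable def PiPoly (n : ℕ) (lam : Fin n → ℝ) (i : Fin n) : Polynomial ℝ :=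
  ∏ j ∈ Finset.univ.erase i, (C (lam j) - X)

/-- `I_ξ(t) = Σ_{i=1}^n ξ_i² Π_i(t)` as a real polynomial in `t`. -/
noncomputable def IPoly (n : ℕ) (lam : Fin n → ℝ) (ξ : Fin n → ℝ) : Polynomial ℝ :=
  ∑ i, C ((ξ i) ^ 2) * PiPoly n lam i

open Finset

theorem prod_comp_eq_pow_mul_prod_filter_ne {ι α M : Type*} [CommMonoid M] [DecidableEq α]
    (s : Finset ι) (g : ι → α) (F : α → M) (a : α) :
    ∏ l ∈ s, F (g l) = F a ^ #(s.filter (g · = a)) * ∏ l ∈ s.filter (g · ≠ a), F (g l) := by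
  rw [← prod_filter_mul_prod_filter_not s (g · = a),
    prod_eq_pow_card fun l hl => by rw [(mem_filter.1 hl).2]]

theorem C_sub_X_ne_zero {R : Type*} [Ring R] [Nontrivial R] (a : R) : C a - X ≠ 0 := by
  rw [← neg_sub]
  exact neg_ne_zero.2 (X_sub_C_ne_zero a)

section

variable {n : ℕ} (lam : Fin n → ℝ) (i : Fin n)

theorem PiPoly_eq_pow_mul (j : Fin n) :
    PiPoly n lam j = (C (lam i) - X) ^ #((univ.erase j).filter (lam · = lam i)) *
      ∏ l ∈ (univ.erase j).filter (lam · ≠ lam i), (C (lam l) - X) :=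
  prod_comp_eq_pow_mul_prod_filter_ne _ lam (fun a => C a - X) (lam i)

theorem PiPoly_of_eq {j : Fin n} (hj : lam j = lam i) :
    PiPoly n lam j = (C (lam i) - X) ^ (#(univ.filter (lam · = lam i)) - 1) *
      ∏ l ∈ univ.filter (lam · ≠ lam i), (C (lam l) - X) := by
  have hjS : j ∈ univ.filter (lam · = lam i) := mem_filter.2 ⟨mem_univ j, hj⟩
  have hjT : j ∉ univ.filter (lam · ≠ lam i) := by simp [hj]
  rw [PiPoly_eq_pow_mul lam i, filter_erase, filter_erase, card_erase_of_mem hjS,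
    erase_eq_of_notMem hjT]

theorem PiPoly_of_ne {j : Fin n} (hj : lam j ≠ lam i) :
    PiPoly n lam j = (C (lam i) - X) ^ (#(univ.filter (lam · = lam i)) - 1) *
      ((C (lam i) - X) * ∏ l ∈ (univ.filter (lam · ≠ lam i)).erase j, (C (lam l) - X)) := by
  have hjS : j ∉ univ.filter (lam · = lam i) := by simp [hj]
  have hcard : 0 < #(univ.filter (lam · = lam i)) :=
    card_pos.2 ⟨i, mem_filter.2 ⟨mem_univ i, rfl⟩⟩
  rw [PiPoly_eq_pow_mul lam i, filter_erase, filter_erase, erase_eq_of_notMem hjS, ← mul_assoc,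
    ← pow_succ, Nat.sub_add_cancel hcard]

/-- The quotient `Î_ξ = I_ξ / (λ_i − t) ^ (k − 1)`. -/
noncomputable def reducedIPoly (ξ : Fin n → ℝ) : ℝ[X] :=
  C (∑ j ∈ univ.filter (lam · = lam i), ξ j ^ 2) *
      ∏ l ∈ univ.filter (lam · ≠ lam i), (C (lam l) - X) +
    (C (lam i) - X) * ∑ j ∈ univ.filter (lam · ≠ lam i),
      C (ξ j ^ 2) * ∏ l ∈ (univ.filter (lam · ≠ lam i)).erase j, (C (lam l) - X)

theorem IPoly_eq_pow_mul_reducedIPoly (ξ : Fin n → ℝ) :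
    IPoly n lam ξ =
      (C (lam i) - X) ^ (#(univ.filter (lam · = lam i)) - 1) * reducedIPoly lam i ξ := by
  rw [IPoly, ← sum_filter_add_sum_filter_not univ (lam · = lam i), reducedIPoly, mul_add]
  congr 1
  · rw [map_sum, sum_mul, mul_sum]
    refine sum_congr rfl fun j hj => ?_
    rw [PiPoly_of_eq lam i (mem_filter.1 hj).2]
    ring
  · rw [mul_sum, mul_sum]
    refine sum_congr rfl fun j hj => ?_
    rw [PiPoly_of_ne lam i (mem_filter.1 hj).2]
    ring

theorem IPoly_div_eq_reducedIPoly (ξ : Fin n → ℝ) :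
    IPoly n lam ξ / (C (lam i) - X) ^ (#(univ.filter (lam · = lam i)) - 1) =
      reducedIPoly lam i ξ := by
  rw [IPoly_eq_pow_mul_reducedIPoly, mul_div_cancel_left₀ _ (pow_ne_zero _ (C_sub_X_ne_zero _))]

theorem eval_reducedIPoly (ξ : Fin n → ℝ) :
    (reducedIPoly lam i ξ).eval (lam i) =
      (∏ l ∈ univ.filter (lam · ≠ lam i), (lam l - lam i)) *
        ∑ j ∈ univ.filter (lam · = lam i), ξ j ^ 2 := by
  simp only [reducedIPoly, eval_add, eval_mul, eval_C, eval_prod, eval_sub, eval_X, sub_self,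
    zero_mul, add_zero]
  ring

theorem eval_reducedIPoly_one_ne_zero : (reducedIPoly lam i 1).eval (lam i) ≠ 0 := by
  rw [eval_reducedIPoly]
  refine mul_ne_zero (prod_ne_zero_iff.2 fun l hl => sub_ne_zero.2 (mem_filter.1 hl).2) ?_
  simp

end

theorem stmt6 (n : ℕ) (lam : Fin n → ℝ)
    (i : ℕ) (hi : i + 1 < n)
    (k : ℕ)
    (hk : k = (Finset.univ.filter (fun j : Fin n => lam j = lam ⟨i, by omega⟩)).card) :
    (∀ ξ : Fin n → ℝ, (C (lam ⟨i, by omega⟩) - X) ^ (k - 1) ∣ IPoly n lam ξ) ∧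
    (∀ ξ : Fin n → ℝ,
      (IPoly n lam ξ / (C (lam ⟨i, by omega⟩) - X) ^ (k - 1)).eval (lam ⟨i, by omega⟩) =
        (∏ l ∈ Finset.univ.filter (fun l : Fin n => lam l ≠ lam ⟨i, by omega⟩),
            (lam l - lam ⟨i, by omega⟩)) *
          ∑ j ∈ Finset.univ.filter (fun j : Fin n => lam j = lam ⟨i, by omega⟩), (ξ j) ^ 2) ∧
    (∃ ξ : Fin n → ℝ,
      (IPoly n lam ξ / (C (lam ⟨i, by omega⟩) - X) ^ (k - 1)).eval (lam ⟨i, by omega⟩) ≠ 0) := by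
  subst hk
  refine ⟨fun ξ => ⟨_, IPoly_eq_pow_mul_reducedIPoly lam _ ξ⟩, fun ξ => ?_, ⟨1, ?_⟩⟩
  · rw [IPoly_div_eq_reducedIPoly, eval_reducedIPoly]
  · rw [IPoly_div_eq_reducedIPoly]
    exact eval_reducedIPoly_one_ne_zero lam _
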